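/- arXiv:1906.12107 — 2 statements merged into one kernel-verified Lean document; each statement's English description precedes it below -/
import Mathlib

section
/- Suppose f_{α,γ}(λ,∂) ∈ ℂ[λ,∂] (α, γ ∈ Δ) satisfies the intermediate-series equation, every f_{α,γ} is nonzero, and every f_{β,γ} has degree at most 1 in ∂ (equivalently, no f_{β,γ} is of Form (III) or Form (IV)). Then there exist constants c, e ∈ ℂ and nonzero constants c_{β,γ} ∈ ℂ (β, γ ∈ Δ) satisfying c_{α+β,γ} = ((α+β+b)/((α+b)(β+b))) c_{β,γ} c_{α,β+γ} for all α, β, γ ∈ Δ, such that for all β, γ ∈ Δ: f_{β,γ}(λ,∂) = c_{β,γ}(∂ + (b/(β+b))(e + (β+γ)/b)λ + c − φ(β+γ)/b + (φ(β)/(β+b))(e + (β+γ)/b)). -/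
/-- Evaluation of a two-variable polynomial `P(λ,∂) ∈ ℂ[λ,∂]` at `λ = l`, `∂ = d`. -/
noncomputable def ev2 (P : MvPolynomial (Fin 2) ℂ) (l d : ℂ) : ℂ :=
  MvPolynomial.eval ![l, d] P

/-- `B(α,β) = (1/b)(φ(α)β − φ(β)α + b(φ(α) − φ(β)))`. -/
noncomputable def Bc (b : ℂ) {Δ : AddSubgroup ℂ} (φ : Δ →+ ℂ) (α β : Δ) : ℂ :=
  (1 / b) * (φ α * (β : ℂ) - φ β * (α : ℂ) + b * (φ α - φ β))

/-- The intermediate-series equation for a family `f_{α,γ}(λ,∂) ∈ ℂ[λ,∂]`: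
`((β+b)λ − (α+b)μ + B(α,β)) f_{α+β,γ}(λ+μ,∂)
  = f_{β,γ}(μ,λ+∂) f_{α,β+γ}(λ,∂) − f_{α,γ}(λ,μ+∂) f_{β,α+γ}(μ,∂)`
for all `α, β, γ ∈ Δ` (an identity in `ℂ[λ,μ,∂]`, stated via evaluation at all complex
points `l, m, d`).  Equivalently, `V = ⊕_{γ∈Δ} ℂ[∂]M_γ` with
`x_α λ M_γ = f_{α,γ}(λ,∂) M_{α+γ}` is a free intermediate series module over
`CL(b,φ)`. -/
def ISE (Δ : AddSubgroup ℂ) (b : ℂ) (φ : Δ →+ ℂ)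
    (f : Δ → Δ → MvPolynomial (Fin 2) ℂ) : Prop :=
  ∀ α β γ : Δ, ∀ l m d : ℂ,
    (((β : ℂ) + b) * l - ((α : ℂ) + b) * m + Bc b φ α β)
        * ev2 (f (α + β) γ) (l + m) d
      = ev2 (f β γ) m (l + d) * ev2 (f α (β + γ)) l d
        - ev2 (f α γ) l (m + d) * ev2 (f β (α + γ)) m d


/-!
Write `f_{β,γ}(λ,∂) = P_{β,γ}(λ) ∂ + Q_{β,γ}(λ)`. The equation at `α = β = 0` forces
`f_{0,γ} = b∂ + p_γ λ + q_γ`. At `α = 0` it becomes linear in `f_{β,γ}`: for `λ = 0` it gives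
`q_{β+γ} = q_γ - φ(β)`, and for `μ = 0` it expresses `((β+b)λ - φ(β)) P_{β,γ}(λ)` and
`((β+b)λ - φ(β)) Q_{β,γ}(λ)` as polynomials of degree at most `1` and `2`, so `P_{β,γ}` is
constant and `Q_{β,γ}` affine. Either `P_{β,γ}` is nonzero and `p_{β+γ} = p_γ + β`, or
`P_{β,γ} = 0` and `p_{β+γ} = p_γ + β + b`; comparing `(β, γ)` with `(-β, β + γ)` excludes the
second case because `b ≠ 0`. Hence `p_δ = p_0 + δ` and `q_δ = q_0 - φ(δ)`, which is the normal
form with `e = p_0 / b`, `c = q_0 / b`, and the `∂²` and `λ∂` coefficients of the general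
equation give the relation between the leading constants.
-/

open Polynomial

namespace Polynomial

theorem eq_of_forall_mul_eval_eq {p q r : ℂ[X]} (hr : r ≠ 0)
    (h : ∀ x, r.eval x * p.eval x = r.eval x * q.eval x) : p = q :=
  mul_left_cancel₀ hr (Polynomial.funext fun x => by simpa using h x)

theorem natDegree_le_of_eval_linear_mul {c t : ℂ} {u r : ℂ[X]} {n : ℕ} (hc : c ≠ 0)
    (h : ∀ x, (c * x - t) * u.eval x = r.eval x) (hr : r.natDegree ≤ n + 1) :
    u.natDegree ≤ n := by
  rcases eq_or_ne u 0 with rfl | hu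
  · simp
  have hlin : (C c * X - C t).natDegree = 1 := by compute_degree!
  have hprod : (C c * X - C t) * u = r := Polynomial.funext fun x => by simpa using h x
  have := natDegree_mul (p := C c * X - C t) (q := u)
    (fun h0 => by simp [h0] at hlin) hu
  rw [hprod, hlin] at this
  omega

theorem eq_C_and_eq_of_eval_linear_mul {c s t : ℂ} {u : ℂ[X]} (hc : c ≠ 0) (hu : u ≠ 0)
    (h : ∀ x, (c * x - t) * u.eval x = u.eval 0 * (s * x - t)) :
    u = C (u.eval 0) ∧ s = c := by
  have hdeg : u.natDegree ≤ 0 :=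
    natDegree_le_of_eval_linear_mul (r := C (u.eval 0) * (C s * X - C t)) hc
      (fun x => by simpa using h x) (by compute_degree)
  have hu0 : u = C (u.eval 0) := by
    rw [← coeff_zero_eq_eval_zero]; exact eq_C_of_natDegree_le_zero hdeg
  refine ⟨hu0, ?_⟩
  have hne : u.eval 0 ≠ 0 := fun h0 => hu (by rw [hu0, h0, C_0])
  have h1 := h 1
  rw [hu0] at h1
  simp only [eval_C] at h1
  exact mul_left_cancel₀ hne (by linear_combination -h1)

theorem eq_C_of_eval_add_eq_mul {b : ℂ} {a : ℂ[X]} (ha : a ≠ 0)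
    (h : ∀ l m, l ≠ m → b * a.eval (l + m) = a.eval l * a.eval m) : a = C b := by
  refine Polynomial.funext fun m => ?_
  have hcomp : C b * a.comp (X + C m) = a * C (a.eval m) :=
    eq_of_forall_mul_eval_eq (r := X - C m) (X_sub_C_ne_zero m) fun l => by
      rcases eq_or_ne l m with rfl | hlm
      · simp
      · simpa [eval_comp] using congrArg ((l - m) * ·) (h l m hlm)
  have hlc := congrArg leadingCoeff hcomp
  rw [leadingCoeff_mul, leadingCoeff_mul, leadingCoeff_comp (by simp), leadingCoeff_C,
    leadingCoeff_C, leadingCoeff_X_add_C, one_pow, mul_one] at hlc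
  simpa using mul_left_cancel₀ (leadingCoeff_ne_zero.mpr ha) (by linear_combination -hlc)

theorem exists_eval_eq_of_eval_add {w : ℂ[X]}
    (h : ∀ l m, (l - m) * w.eval (l + m) = l * w.eval l - m * w.eval m) :
    ∃ u v : ℂ, ∀ x, w.eval x = u * x + v := by
  refine ⟨w.eval 1 - w.eval 0, w.eval 0, fun x => ?_⟩
  have hw : w = C (w.eval 1 - w.eval 0) * X + C (w.eval 0) := by
    refine eq_of_forall_mul_eval_eq (r := C 2 * X) (by simp) fun x => ?_
    -- the identities at `(x, 1)`, `(x + 1, -x)`, `(x, -x)` eliminate `w (x + 1)` and `w (-x)`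
    have e1 := h x 1
    have e2 := h (x + 1) (-x)
    have e3 := h x (-x)
    simp only [add_neg_cancel_comm, add_neg_cancel] at e2 e3
    simp only [eval_mul, eval_C, eval_X, eval_add]
    linear_combination -((x + 1) * e1) - (x - 1) * e2 + (x - 1) * e3
  rw [hw]; simp

end Polynomial

theorem exists_ev2_ne_zero {p : MvPolynomial (Fin 2) ℂ} (hp : p ≠ 0) :
    ∃ l d, ev2 p l d ≠ 0 := by
  by_contra! h
  refine hp (MvPolynomial.funext fun x => ?_)
  have hx : ![x 0, x 1] = x := by ext i; fin_cases i <;> rfl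
  simpa [ev2, hx] using h (x 0) (x 1)

theorem exists_ev2_eq_of_degreeOf_le_one {p : MvPolynomial (Fin 2) ℂ}
    (hp : p.degreeOf 1 ≤ 1) :
    ∃ P Q : ℂ[X], ∀ l d, ev2 p l d = P.eval l * d + Q.eval l := by
  refine ⟨∑ e ∈ p.support, C (p.coeff e * (e 1 : ℂ)) * X ^ e 0,
    ∑ e ∈ p.support, C (p.coeff e * (1 - e 1 : ℂ)) * X ^ e 0, fun l d => ?_⟩
  simp only [ev2, MvPolynomial.eval_eq', Fin.prod_univ_two, eval_finsetSum, Finset.sum_mul,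
    ← Finset.sum_add_distrib]
  refine Finset.sum_congr rfl fun e he => ?_
  rcases Nat.le_one_iff_eq_zero_or_eq_one.mp (MvPolynomial.degreeOf_le_iff.mp hp e he) with h | h
  <;> simp [h, mul_assoc]

theorem notMem_of_two_mul_notMem {Δ : AddSubgroup ℂ} {b : ℂ} (hb : 2 * b ∉ Δ) : b ∉ Δ :=
  fun h => hb (by rw [two_mul]; exact Δ.add_mem h h)

theorem coe_add_ne_zero_of_notMem {Δ : AddSubgroup ℂ} {b : ℂ} (hb : b ∉ Δ) (β : Δ) :
    (β : ℂ) + b ≠ 0 := fun h =>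
  hb (by rw [show b = -(β : ℂ) by linear_combination h]; exact Δ.neg_mem β.2)

theorem Bc_zero_left {Δ : AddSubgroup ℂ} {b : ℂ} (hb : b ≠ 0) (φ : Δ →+ ℂ) (β : Δ) :
    Bc b φ 0 β = -φ β := by
  simp only [Bc, map_zero, ZeroMemClass.coe_zero]
  field_simp
  ring

namespace ISE

variable {Δ : AddSubgroup ℂ} {b : ℂ} {φ : Δ →+ ℂ} {f : Δ → Δ → MvPolynomial (Fin 2) ℂ}

theorem exists_ev2_zero_left_eq (hf : ISE Δ b φ f) (hb : b ≠ 0) (hnz : ∀ γ, f 0 γ ≠ 0)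
    (hdeg : ∀ γ, (f 0 γ).degreeOf 1 ≤ 1) :
    ∃ p q : Δ → ℂ, ∀ γ l d, ev2 (f 0 γ) l d = b * d + p γ * l + q γ := by
  suffices ∀ γ, ∃ u v : ℂ, ∀ l d, ev2 (f 0 γ) l d = b * d + u * l + v by
    choose p q h using this
    exact ⟨p, q, h⟩
  intro γ
  obtain ⟨a, w, hPQ⟩ := exists_ev2_eq_of_degreeOf_le_one (hdeg γ)
  have H : ∀ l m d, (b * l - b * m) * (a.eval (l + m) * d + w.eval (l + m))
      = (a.eval m * (l + d) + w.eval m) * (a.eval l * d + w.eval l)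
        - (a.eval l * (m + d) + w.eval l) * (a.eval m * d + w.eval m) := fun l m d => by
    simpa [hPQ, Bc] using hf 0 0 γ l m d
  have hw : ∀ l m, b * ((l - m) * w.eval (l + m))
      = l * (a.eval m * w.eval l) - m * (a.eval l * w.eval m) := fun l m => by
    linear_combination H l m 0
  have ha : a ≠ 0 := by
    rintro rfl
    have hw0 : w = 0 := eq_of_forall_mul_eval_eq (r := C b * X) (by simpa using hb)
      fun x => by simpa [or_assoc] using hw x 0
    obtain ⟨l, d, hne⟩ := exists_ev2_ne_zero (hnz γ)
    exact hne (by simp [hPQ, hw0])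
  have haC : a = C b := eq_C_of_eval_add_eq_mul ha fun l m hlm =>
    mul_left_cancel₀ (sub_ne_zero.mpr hlm) (by linear_combination H l m 1 - H l m 0)
  obtain ⟨u, v, huv⟩ := exists_eval_eq_of_eval_add (w := w) fun l m =>
    mul_left_cancel₀ hb (by simpa [haC, mul_sub, mul_left_comm b] using hw l m)
  exact ⟨u, v, fun l d => by rw [hPQ, haC, huv, eval_C]; ring⟩

variable {p q : Δ → ℂ} {β γ : Δ}

theorem zero_left_const_add (hf : ISE Δ b φ f) (hb : b ≠ 0)
    (h0 : ∀ γ l d, ev2 (f 0 γ) l d = b * d + p γ * l + q γ) (hnz : f β γ ≠ 0) :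
    q (β + γ) = q γ - φ β := by
  obtain ⟨m, d, hne⟩ := exists_ev2_ne_zero hnz
  have H := hf 0 β γ 0 m d
  simp only [zero_add, ZeroMemClass.coe_zero, Bc_zero_left hb, h0] at H
  exact mul_left_cancel₀ hne (by linear_combination -H)

theorem zero_left_coeff_identities (hf : ISE Δ b φ f) (hb : b ≠ 0)
    (h0 : ∀ γ l d, ev2 (f 0 γ) l d = b * d + p γ * l + q γ) (hq : q (β + γ) = q γ - φ β)
    {P Q : ℂ[X]} (hPQ : ∀ l d, ev2 (f β γ) l d = P.eval l * d + Q.eval l) :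
    (∀ l, (((β : ℂ) + b) * l - φ β) * P.eval l
        = P.eval 0 * ((p (β + γ) - p γ + b) * l - φ β)) ∧
    (∀ l, (((β : ℂ) + b) * l - φ β) * Q.eval l
        = P.eval 0 * l * (p (β + γ) * l + q (β + γ))
          + Q.eval 0 * ((p (β + γ) - p γ) * l - φ β)) := by
  have H : ∀ l d, _ := fun l d => hf 0 β γ l 0 d
  simp only [zero_add, add_zero, mul_zero, sub_zero, ZeroMemClass.coe_zero, Bc_zero_left hb,
    h0, hPQ] at H
  exact ⟨fun l => by linear_combination H l 1 - H l 0 + P.eval 0 * hq,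
    fun l => by linear_combination H l 0 + Q.eval 0 * hq⟩

theorem slope_dichotomy (hf : ISE Δ b φ f) (hb : b ≠ 0) (hβb : (β : ℂ) + b ≠ 0)
    (h0 : ∀ γ l d, ev2 (f 0 γ) l d = b * d + p γ * l + q γ) (hq : q (β + γ) = q γ - φ β)
    (hnz : f β γ ≠ 0) {P Q : ℂ[X]} (hPQ : ∀ l d, ev2 (f β γ) l d = P.eval l * d + Q.eval l) :
    (p (β + γ) = p γ + β ∧ ∃ A ≠ 0, P = C A) ∨ p (β + γ) = p γ + β + b := by
  obtain ⟨hP, hQ⟩ := zero_left_coeff_identities hf hb h0 hq hPQ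
  rcases eq_or_ne P 0 with rfl | hP0
  · have hQ0 : Q ≠ 0 := by
      rintro rfl
      obtain ⟨l, d, hne⟩ := exists_ev2_ne_zero hnz
      exact hne (by simp [hPQ])
    have := (eq_C_and_eq_of_eval_linear_mul hβb hQ0 fun l => by simpa using hQ l).2
    exact Or.inr (by linear_combination this)
  · obtain ⟨hPC, hslope⟩ := eq_C_and_eq_of_eval_linear_mul hβb hP0 hP
    exact Or.inl ⟨by linear_combination hslope,
      P.eval 0, fun h => hP0 (by rw [hPC, h, C_0]), hPC⟩

theorem zero_left_slope_add (hf : ISE Δ b φ f) (hb : b ∉ Δ)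
    (h0 : ∀ γ l d, ev2 (f 0 γ) l d = b * d + p γ * l + q γ)
    (hq : ∀ β γ, q (β + γ) = q γ - φ β) (hnz : ∀ β γ, f β γ ≠ 0)
    (hdeg : ∀ β γ, (f β γ).degreeOf 1 ≤ 1) (β γ : Δ) : p (β + γ) = p γ + β := by
  have hb0 : b ≠ 0 := fun h => hb (h ▸ Δ.zero_mem)
  have key : ∀ β γ : Δ, p (β + γ) = p γ + β ∨ p (β + γ) = p γ + β + b := fun β γ => by
    obtain ⟨P, Q, hPQ⟩ := exists_ev2_eq_of_degreeOf_le_one (hdeg β γ)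
    rcases slope_dichotomy hf hb0 (coe_add_ne_zero_of_notMem hb β) h0 (hq β γ) (hnz β γ) hPQ
      with ⟨h, -⟩ | h
    exacts [Or.inl h, Or.inr h]
  have key' := key (-β) (β + γ)
  rw [neg_add_cancel_left, AddSubgroup.coe_neg] at key'
  rcases key β γ with h | h
  · exact h
  · exfalso
    rcases key' with h' | h'
    · exact hb0 (by linear_combination -(h + h'))
    · exact hb0 (by linear_combination -(h + h') / 2)

theorem exists_ev2_eq_const_mul (hf : ISE Δ b φ f) (hb : b ≠ 0) (hβb : (β : ℂ) + b ≠ 0)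
    (h0 : ∀ γ l d, ev2 (f 0 γ) l d = b * d + p γ * l + q γ) (hq : q (β + γ) = q γ - φ β)
    (hp : p (β + γ) = p γ + β) (hnz : f β γ ≠ 0) (hdeg : (f β γ).degreeOf 1 ≤ 1) :
    ∃ A ≠ 0, ∀ l d, ev2 (f β γ) l d
      = A * (d + p (β + γ) / (β + b) * l + (q (β + γ) + φ β * (p (β + γ) / (β + b))) / b) := by
  obtain ⟨P, Q, hPQ⟩ := exists_ev2_eq_of_degreeOf_le_one hdeg
  obtain ⟨-, A, hA, rfl⟩ | h := slope_dichotomy hf hb hβb h0 hq hnz hPQ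
  swap
  · exact absurd (by linear_combination hp - h) hb
  have hQ := (zero_left_coeff_identities hf hb h0 hq hPQ).2
  simp only [eval_C] at hQ
  have hQdeg : Q.natDegree ≤ 1 := natDegree_le_of_eval_linear_mul hβb
    (r := C A * X * (C (p (β + γ)) * X + C (q (β + γ)))
      + C (Q.eval 0) * (C (p (β + γ) - p γ) * X - C (φ β)))
    (fun x => by simpa using hQ x) (by compute_degree)
  obtain ⟨v₁, v₀, rfl⟩ := exists_eq_X_add_C_of_natDegree_le_one hQdeg
  simp only [eval_add, eval_mul, eval_C, eval_X, mul_zero, zero_add] at hQ hPQ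
  have hQ' : ∀ x, (((β : ℂ) + b) * x - φ β) * (v₁ * x + v₀)
      = A * x * (p (β + γ) * x + q (β + γ)) + v₀ * (β * x - φ β) := fun x => by
    linear_combination hQ x + v₀ * x * hp
  have hv₁ : v₁ = A * p (β + γ) / (β + b) := by
    field_simp
    linear_combination (hQ' 2 + hQ' 0 - 2 * hQ' 1) / 2
  have hv₀ : v₀ = (A * q (β + γ) + φ β * v₁) / b := by
    field_simp
    linear_combination (4 * hQ' 1 - hQ' 2 - 3 * hQ' 0) / 2
  refine ⟨A, hA, fun l d => ?_⟩
  rw [hPQ, hv₀, hv₁]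
  ring

theorem cocycle (hf : ISE Δ b φ f) {cc s κ : Δ → Δ → ℂ}
    (hform : ∀ β γ l d, ev2 (f β γ) l d = cc β γ * (d + s β γ * l + κ β γ))
    (hs : ∀ α β γ : Δ, ((α : ℂ) + b) * (s α (β + γ) - s α γ) = β) (α β γ : Δ) :
    ((α : ℂ) + b) * ((β : ℂ) + b) * cc (α + β) γ
      = ((α : ℂ) + β + b) * (cc β γ * cc α (β + γ)) := by
  have H : ∀ l d, _ := fun l d => hf α β γ l 0 d
  simp only [hform, zero_add, add_zero, mul_zero, sub_zero] at H
  -- the `∂²` and `λ∂` coefficients of `H`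
  have hsq : cc β γ * cc α (β + γ) = cc α γ * cc β (α + γ) := by
    linear_combination (2 * H 0 1 - H 0 2 - H 0 0) / 2
  have hld : ((β : ℂ) + b) * cc (α + β) γ
      = cc β γ * cc α (β + γ) * (1 + s α (β + γ)) - cc α γ * cc β (α + γ) * s α γ := by
    linear_combination H 1 1 - H 1 0 - H 0 1 + H 0 0
  linear_combination ((α : ℂ) + b) * hld + cc β γ * cc α (β + γ) * hs α β γ
    + ((α : ℂ) + b) * s α γ * hsq

end ISE

theorem stmt18_general (Δ : AddSubgroup ℂ)
    (b : ℂ) (hb : 2 * b ∉ Δ) (φ : Δ →+ ℂ)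
    (f : Δ → Δ → MvPolynomial (Fin 2) ℂ) (hf : ISE Δ b φ f)
    (hnz : ∀ α γ : Δ, f α γ ≠ 0)
    (hdeg : ∀ β γ : Δ, MvPolynomial.degreeOf 1 (f β γ) ≤ 1) :
    ∃ c e : ℂ, ∃ cc : Δ → Δ → ℂ,
      (∀ β γ : Δ, cc β γ ≠ 0) ∧
      (∀ α β γ : Δ,
        cc (α + β) γ
          = (((α : ℂ) + (β : ℂ) + b) / (((α : ℂ) + b) * ((β : ℂ) + b)))
              * cc β γ * cc α (β + γ)) ∧
      (∀ β γ : Δ, ∀ l d : ℂ,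
        ev2 (f β γ) l d
          = cc β γ * (d + (b / ((β : ℂ) + b)) * (e + ((β : ℂ) + (γ : ℂ)) / b) * l
              + c - φ (β + γ) / b
              + (φ β / ((β : ℂ) + b)) * (e + ((β : ℂ) + (γ : ℂ)) / b))) := by
  have hb' := notMem_of_two_mul_notMem hb
  have hb0 : b ≠ 0 := fun h => hb' (h ▸ Δ.zero_mem)
  have hβb := coe_add_ne_zero_of_notMem hb'
  obtain ⟨p, q, h0⟩ := hf.exists_ev2_zero_left_eq hb0 (hnz 0) (hdeg 0)
  have hq β γ := hf.zero_left_const_add hb0 h0 (hnz β γ)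
  have hp := hf.zero_left_slope_add hb' h0 hq hnz hdeg
  choose cc hcc hform using fun β γ =>
    hf.exists_ev2_eq_const_mul hb0 (hβb β) h0 (hq β γ) (hp β γ) (hnz β γ) (hdeg β γ)
  refine ⟨q 0 / b, p 0 / b, cc, hcc, fun α β γ => ?_, fun β γ l d => ?_⟩
  · have hs (α β γ : Δ) :
        ((α : ℂ) + b) * (p (α + (β + γ)) / (α + b) - p (α + γ) / (α + b)) = β := by
      rw [add_left_comm, hp β (α + γ)]
      field_simp [hβb α]
      ring
    rw [div_mul_eq_mul_div, div_mul_eq_mul_div, eq_div_iff (mul_ne_zero (hβb α) (hβb β))]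
    linear_combination hf.cocycle hform hs α β γ
  · have hp' := hp (β + γ) 0
    have hq' := hq (β + γ) 0
    rw [add_zero] at hp' hq'
    rw [hform, hp', hq']
    push_cast
    field_simp
    ring

/-- If a family satisfying the intermediate-series equation has all
members nonzero and every member has degree at most 1 in `∂` (equivalently, no member
is of Form (III) or Form (IV)), then there are constants `c, e ∈ ℂ` and nonzero
constants `c_{β,γ}` with `c_{α+β,γ} = ((α+β+b)/((α+b)(β+b))) c_{β,γ} c_{α,β+γ}`
such that `f_{β,γ}(λ,∂) = c_{β,γ}(∂ + (b/(β+b))(e + (β+γ)/b)λ + c − φ(β+γ)/b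
+ (φ(β)/(β+b))(e + (β+γ)/b))` for all `β, γ ∈ Δ`. -/
theorem stmt18 (Δ : AddSubgroup ℂ) (hΔinf : (Δ : Set ℂ).Infinite)
    (b : ℂ) (hb : 2 * b ∉ Δ) (φ : Δ →+ ℂ)
    (f : Δ → Δ → MvPolynomial (Fin 2) ℂ) (hf : ISE Δ b φ f)
    (hnz : ∀ α γ : Δ, f α γ ≠ 0)
    (hdeg : ∀ β γ : Δ, MvPolynomial.degreeOf 1 (f β γ) ≤ 1) :
    ∃ c e : ℂ, ∃ cc : Δ → Δ → ℂ,
      (∀ β γ : Δ, cc β γ ≠ 0) ∧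
      (∀ α β γ : Δ,
        cc (α + β) γ
          = (((α : ℂ) + (β : ℂ) + b) / (((α : ℂ) + b) * ((β : ℂ) + b)))
              * cc β γ * cc α (β + γ)) ∧
      (∀ β γ : Δ, ∀ l d : ℂ,
        ev2 (f β γ) l d
          = cc β γ * (d + (b / ((β : ℂ) + b)) * (e + ((β : ℂ) + (γ : ℂ)) / b) * l
              + c - φ (β + γ) / b
              + (φ β / ((β : ℂ) + b)) * (e + ((β : ℂ) + (γ : ℂ)) / b))) :=
  stmt18_general Δ b hb φ f hf hnz hdeg
end

section
/- Let Δ be an infinite additive subgroup of ℂ and b ∈ ℂ with 2b ∉ Δ (so α + b ≠ 0 and α + β + b ≠ 0 for all α, β ∈ Δ). Let c_{α,β} ∈ ℂ∖{0} (α, β ∈ Δ) satisfy c_{α+β,γ} = ((α+β+b)/((α+b)(β+b))) c_{β,γ} c_{α,β+γ} for all α, β, γ ∈ Δ. Then there exist nonzero numbers e_α ∈ ℂ (α ∈ Δ) such that c_{α,β} = ((α+b)(β+b)/(α+β+b)) · (e_{α+β}/e_β) for all α, β ∈ Δ. -/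
/-- Let `Δ` be an infinite additive subgroup of ℂ and `b ∈ ℂ` with
`2b ∉ Δ` (so `α + b ≠ 0` and `α + β + b ≠ 0` for all `α, β ∈ Δ`).  If nonzero constants
`c_{α,β} ∈ ℂ` satisfy `c_{α+β,γ} = ((α+β+b)/((α+b)(β+b))) c_{β,γ} c_{α,β+γ}`, then
there are nonzero numbers `e_α ∈ ℂ` with
`c_{α,β} = ((α+b)(β+b)/(α+β+b)) · (e_{α+β}/e_β)`. -/
theorem stmt19 (Δ : AddSubgroup ℂ) (hΔinf : (Δ : Set ℂ).Infinite)
    (b : ℂ) (hb : 2 * b ∉ Δ)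
    (c : Δ → Δ → ℂ) (hcnz : ∀ α β : Δ, c α β ≠ 0)
    (hc : ∀ α β γ : Δ,
      c (α + β) γ
        = (((α : ℂ) + (β : ℂ) + b) / (((α : ℂ) + b) * ((β : ℂ) + b)))
            * c β γ * c α (β + γ)) :
    ∃ e : Δ → ℂ, (∀ α : Δ, e α ≠ 0) ∧
      ∀ α β : Δ,
        c α β = (((α : ℂ) + b) * ((β : ℂ) + b) / ((α : ℂ) + (β : ℂ) + b))
            * (e (α + β) / e β) := by
  have hb0 : b ≠ 0 := by
    intro h
    exact hb (by rw [h, mul_zero]; exact Δ.zero_mem)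
  have hne : ∀ x : Δ, (x : ℂ) + b ≠ 0 := by
    intro x h
    apply hb
    have h2 : 2 * b = ((-(x + x) : Δ) : ℂ) := by
      push_cast
      linear_combination 2 * h
    rw [h2]
    exact (-(x + x)).2
  refine ⟨fun α => c α 0 / b, fun α => div_ne_zero (hcnz α 0) hb0, fun α β => ?_⟩
  have key := hc α β 0
  simp only [add_zero] at key
  have h1 : ((α : ℂ)) + b ≠ 0 := hne α
  have h2 : ((β : ℂ)) + b ≠ 0 := hne β
  have h3 : ((α : ℂ)) + (β : ℂ) + b ≠ 0 := by
    have := hne (α + β)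
    push_cast at this
    exact this
  have h4 : c β 0 ≠ 0 := hcnz β 0
  field_simp at key ⊢
  linear_combination -key
end
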